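/- arXiv:0809.1176 — 3 statements merged into one kernel-verified Lean document; each statement's English description precedes it below -/
import Mathlib

section
/- Let c : [0,1] → A be a continuous path of idempotents in a unital Banach algebra A. Then there exists a continuous path u : [0,1] → Aˣ of invertible elements with u(0) = 1 and u(t)·c(0)·u(t)⁻¹ = c(t) for all t. In particular c(1) is conjugate to c(0) by an invertible element connected to the identity. -/
/-!
For idempotents `p` and `q` the element `v = q p + (1 - q)(1 - p)` satisfies `v p = q v`, and
`v = 1` when `q = p`; hence `v` is invertible when `q` is close to `p`. By uniform continuity,
`[0, 1]` splits into finitely many steps along which these intertwiners are invertible, and the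
path of units is obtained by multiplying them, one step after the other.
-/

open Set

section Ring

variable {R : Type*} [Ring R] {p q : R}

def idempotentIntertwiner (p q : R) : R := q * p + (1 - q) * (1 - p)

theorem IsIdempotentElem.idempotentIntertwiner_self (hp : IsIdempotentElem p) :
    idempotentIntertwiner p p = 1 := by
  rw [idempotentIntertwiner, hp.eq, hp.one_sub.eq, add_sub_cancel]

theorem IsIdempotentElem.idempotentIntertwiner_mul (hp : IsIdempotentElem p)
    (hq : IsIdempotentElem q) :
    idempotentIntertwiner p q * p = q * idempotentIntertwiner p q := by
  have hp' : (1 - p) * p = 0 := by rw [sub_mul, one_mul, hp.eq, sub_self]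
  have hq' : q * (1 - q) = 0 := by rw [mul_sub, mul_one, hq.eq, sub_self]
  rw [idempotentIntertwiner, add_mul, mul_add, mul_assoc, hp.eq, mul_assoc, hp', ← mul_assoc,
    hq.eq, ← mul_assoc, hq', mul_zero, zero_mul]

end Ring

section Banach

variable {A : Type*} [NormedRing A]

theorem exists_pos_forall_dist_lt_isUnit_idempotentIntertwiner [HasSummableGeomSeries A]
    {X : Type*} [PseudoMetricSpace X] [CompactSpace X] {c : X → A} (hc : Continuous c) (hidem : ∀ x, IsIdempotentElem (c x)) :
    ∃ δ > 0, ∀ x y, dist x y < δ → IsUnit (idempotentIntertwiner (c x) (c y)) := by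
  have hG : UniformContinuous fun z : X × X => idempotentIntertwiner (c z.1) (c z.2) :=
    CompactSpace.uniformContinuous_of_continuous (by unfold idempotentIntertwiner; fun_prop)
  obtain ⟨δ, hδ, hG⟩ := Metric.uniformContinuous_iff.mp hG 1 one_pos
  refine ⟨δ, hδ, fun x y hxy => ?_⟩
  have hnear := @hG (x, y) (x, x) (by simpa [Prod.dist_eq, dist_comm] using hxy)
  rw [(hidem x).idempotentIntertwiner_self, dist_eq_norm, ← norm_neg, neg_sub] at hnear
  simpa using isUnit_one_sub_of_norm_lt_one hnear

/-- The path is kept in `A` rather than `Aˣ`: continuity of the inverse comes for free at the end,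
since `Units.val` is an open embedding. -/
structure IsConjugatingPath (d : ℝ → A) (T : ℝ) (U : ℝ → A) : Prop where
  continuous : Continuous U
  isUnit : ∀ t, IsUnit (U t)
  map_zero : U 0 = 1
  conj : ∀ t ∈ Icc 0 T, U t * d 0 = d t * U t

namespace IsConjugatingPath

variable {d : ℝ → A} {s T : ℝ} {U : ℝ → A}

theorem one : IsConjugatingPath d 0 fun _ => 1 where
  continuous := continuous_const
  isUnit _ := isUnit_one
  map_zero := rfl
  conj t ht := by rw [Icc_self, mem_singleton_iff] at ht; rw [ht, one_mul, mul_one]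

theorem mono {T' : ℝ} (h : IsConjugatingPath d T U) (hT : T' ≤ T) : IsConjugatingPath d T' U where
  __ := h
  conj t ht := h.conj t (Icc_subset_Icc_right hT ht)

/-- On `[T, T + s]` the path is continued by the intertwiner from `d T` to `d t`; outside it the
argument of `d` is clamped to `[T, T + s]`, so that every value stays a unit. -/
theorem extend (hd : Continuous d) (hidem : ∀ t, IsIdempotentElem (d t))
    (hs : 0 ≤ s) (hunit : ∀ a b, |a - b| ≤ s → IsUnit (idempotentIntertwiner (d a) (d b)))
    (hT : 0 ≤ T) (h : IsConjugatingPath d T U) :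
    IsConjugatingPath d (T + s)
      fun t => idempotentIntertwiner (d T) (d (max T (min t (T + s)))) * U (min t T) where
  continuous := by
    have := h.continuous
    unfold idempotentIntertwiner
    fun_prop
  isUnit t := by
    refine (hunit _ _ ?_).mul (h.isUnit _)
    rw [abs_le]
    constructor <;> linarith [le_max_left T (min t (T + s)),
      max_le (le_add_of_nonneg_right hs) (min_le_right t (T + s))]
  map_zero := by
    rw [min_eq_left (by linarith), max_eq_left hT, (hidem T).idempotentIntertwiner_self,
      min_eq_left hT, h.map_zero, one_mul]
  conj t ht := by
    rcases le_total t T with htT | hTt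
    · rw [min_eq_left (htT.trans (by linarith)), max_eq_left htT,
        (hidem T).idempotentIntertwiner_self, min_eq_left htT, one_mul]
      exact h.conj t ⟨ht.1, htT⟩
    · rw [min_eq_left ht.2, max_eq_right hTt, min_eq_right hTt, mul_assoc,
        h.conj T ⟨hT, le_rfl⟩, ← mul_assoc, ((hidem T).idempotentIntertwiner_mul (hidem t)),
        mul_assoc]

theorem exists_of_forall_abs_sub_le (hd : Continuous d)
    (hidem : ∀ t, IsIdempotentElem (d t)) (hs : 0 < s)
    (hunit : ∀ a b, |a - b| ≤ s → IsUnit (idempotentIntertwiner (d a) (d b))) (T : ℝ) :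
    ∃ U, IsConjugatingPath d T U := by
  have step : ∀ n : ℕ, ∃ U, IsConjugatingPath d (n * s) U := by
    intro n
    induction n with
    | zero => exact ⟨_, by simpa using one⟩
    | succ n ih =>
      obtain ⟨U, hU⟩ := ih
      exact ⟨_, by simpa [add_mul] using hU.extend hd hidem hs.le hunit (by positivity)⟩
  obtain ⟨n, hn⟩ := exists_nat_ge (T / s)
  obtain ⟨U, hU⟩ := step n
  exact ⟨U, hU.mono ((div_le_iff₀ hs).mp hn)⟩

end IsConjugatingPath

end Banach

theorem stmt2_general {A : Type*} [NormedRing A] [CompleteSpace A]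
    (c : unitInterval → A) (hc : Continuous c)
    (hidem : ∀ t, c t * c t = c t) :
    ∃ u : unitInterval → Aˣ, Continuous u ∧ u 0 = 1 ∧
      ∀ t, (u t : A) * c 0 * (↑(u t)⁻¹ : A) = c t := by
  obtain ⟨δ, hδ, hunit⟩ := exists_pos_forall_dist_lt_isUnit_idempotentIntertwiner hc hidem
  set d : ℝ → A := fun x => c (projIcc 0 1 zero_le_one x)
  have hunit_d (a b : ℝ) (hab : |a - b| ≤ δ / 2) : IsUnit (idempotentIntertwiner (d a) (d b)) :=
    hunit _ _ <| ((LipschitzWith.projIcc zero_le_one).dist_le_mul a b).trans_lt <| by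
      rw [NNReal.coe_one, one_mul, Real.dist_eq]; linarith
  obtain ⟨U, hU⟩ := IsConjugatingPath.exists_of_forall_abs_sub_le
    (hc.comp continuous_projIcc) (fun _ => hidem _) (half_pos hδ) hunit_d 1
  refine ⟨fun t => (hU.isUnit t).unit,
    Units.isOpenEmbedding_val.continuous_iff.mpr (hU.continuous.comp continuous_subtype_val),
    Units.ext hU.map_zero, fun t => ?_⟩
  have hconj : ((hU.isUnit t).unit : A) * c 0 = c t * (hU.isUnit t).unit := by
    simpa using hU.conj t t.2
  rw [hconj, mul_assoc, Units.mul_inv, mul_one]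

theorem stmt2 {A : Type*} [NormedRing A] [NormedAlgebra ℝ A] [CompleteSpace A]
    (c : unitInterval → A) (hc : Continuous c)
    (hidem : ∀ t, c t * c t = c t) :
    ∃ u : unitInterval → Aˣ, Continuous u ∧ u 0 = 1 ∧
      ∀ t, (u t : A) * c 0 * (↑(u t)⁻¹ : A) = c t :=
  stmt2_general c hc hidem
end

section
/- Let A be a unital Banach algebra and p, q idempotents. If there exist units u, v ∈ Aˣ with u·p·u⁻¹ = q such that u and v lie in the same path component of Aˣ and v commutes with p, then p and q lie in the same path component of the idempotents of A. -/
/-!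
Conjugating `p` along a path of units `w` from `u` to `v` gives the path `w p w⁻¹` of idempotents
from `u p u⁻¹ = q` to `v p v⁻¹`, and the latter is `p` because `v` commutes with `p`.
-/

theorem IsIdempotentElem.units_conj {M : Type*} [Monoid M] {p : M} (hp : IsIdempotentElem p)
    (u : Mˣ) : IsIdempotentElem ((u : M) * p * ↑u⁻¹) := by
  calc (u : M) * p * ↑u⁻¹ * ((u : M) * p * ↑u⁻¹)
      = u * (p * (↑u⁻¹ * u) * p) * ↑u⁻¹ := by simp only [mul_assoc]
    _ = u * p * ↑u⁻¹ := by rw [Units.inv_mul, mul_one, hp.eq, mul_assoc]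

theorem Joined.joinedIn_units_conj {M : Type*} [Monoid M] [TopologicalSpace M] [ContinuousMul M]
    {u v : Mˣ} (h : Joined u v) {p : M} (hp : IsIdempotentElem p) :
    JoinedIn {x | IsIdempotentElem x} ((u : M) * p * ↑u⁻¹) ((v : M) * p * ↑v⁻¹) := by
  have hconj : Continuous fun w : Mˣ => (w : M) * p * ↑w⁻¹ :=
    (Units.continuous_val.mul continuous_const).mul Units.continuous_coe_inv
  refine ((joinedIn_univ.mpr h).map hconj).mono ?_
  rintro _ ⟨w, -, rfl⟩
  exact hp.units_conj w

theorem stmt14_general {A : Type*} [NormedRing A]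
    (p q : A) (hp : p * p = p)
    (u v : Aˣ) (huq : (u : A) * p * (↑u⁻¹ : A) = q)
    (huv : Joined u v) (hv : Commute (v : A) p) :
    JoinedIn {x : A | x * x = x} p q := by
  have hvp : (v : A) * p * ↑v⁻¹ = p := by
    rw [hv.eq, mul_assoc, Units.mul_inv, mul_one]
  have hpath := huv.joinedIn_units_conj hp
  rw [huq, hvp] at hpath
  exact hpath.symm

theorem stmt14 {A : Type*} [NormedRing A] [NormedAlgebra ℝ A] [CompleteSpace A]
    (p q : A) (hp : p * p = p) (hq : q * q = q)
    (u v : Aˣ) (huq : (u : A) * p * (↑u⁻¹ : A) = q)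
    (huv : Joined u v) (hv : Commute (v : A) p) :
    JoinedIn {x : A | x * x = x} p q :=
  stmt14_general p q hp u v huq huv hv
end

section
/- Suppose E = X ⊕ Y is a Banach space where GL(X) and GL(Y) are both path connected but GL(E) is not path connected. Then there exists an invertible t ∈ GL(E) such that the projection q = t·p·t⁻¹ (where p is the projection onto X along Y) is conjugate to p but not joined to p by any continuous path of idempotents. -/
/-!
Idempotents joined by a path of idempotents are conjugate by a unit in the path component of `1`:
two nearby idempotents `e`, `f` are conjugated by `e f + (1 - e)(1 - f)`, which is within
distance `< 1` of `1`, and this local conjugacy propagates along the connected interval.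
So if every conjugate `t p t⁻¹` were joined to `p`, then for each unit `t` some `w` joined to `1`
would make `w t` commute with `p`. A unit commuting with `p` is block diagonal, i.e. the image of
a pair in the path-connected group `GL(X) × GL(Y)`, hence joined to `1`; then so is `t`, and
`GL(X ⊕ Y)` would be path connected.
-/

section ConjByJoinedUnit

variable {M : Type*} [Monoid M] [TopologicalSpace M]

def ConjByJoinedUnit (e f : M) : Prop :=
  ∃ u : Mˣ, Joined 1 u ∧ (u : M) * f * ↑u⁻¹ = e

lemma ConjByJoinedUnit.trans [ContinuousMul M] {e f g : M} (hef : ConjByJoinedUnit e f)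
    (hfg : ConjByJoinedUnit f g) : ConjByJoinedUnit e g := by
  obtain ⟨u, hu, rfl⟩ := hef
  obtain ⟨v, hv, rfl⟩ := hfg
  refine ⟨u * v, by simpa using hu.mul hv, ?_⟩
  simp [mul_assoc]

end ConjByJoinedUnit

section BanachAlgebra

variable {A : Type*} [NormedRing A] [NormedSpace ℝ A] [HasSummableGeomSeries A]

lemma Units.joined_one_oneSub {x : A} (hx : ‖x‖ < 1) : Joined 1 (Units.oneSub x hx) := by
  have hsmall (s : unitInterval) : ‖(s : ℝ) • x‖ < 1 := by
    rw [norm_smul, Real.norm_of_nonneg s.2.1]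
    exact lt_of_le_of_lt (mul_le_of_le_one_left (norm_nonneg x) s.2.2) hx
  refine ⟨{ toFun := fun s => Units.oneSub ((s : ℝ) • x) (hsmall s)
            continuous_toFun := ?_
            source' := by ext; simp
            target' := by ext; simp }⟩
  refine Units.isOpenEmbedding_val.isEmbedding.continuous_iff.mpr ?_
  simp only [Function.comp_def, Units.val_oneSub]
  fun_prop

lemma IsIdempotentElem.conjByJoinedUnit_of_norm_lt {e f : A} (he : IsIdempotentElem e)
    (hf : IsIdempotentElem f) (h : ‖e - f‖ * (‖e‖ + ‖f‖) < 1) : ConjByJoinedUnit e f := by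
  set w : A := e * f + (1 - e) * (1 - f)
  have hw : 1 - w = -(e * (f - e) + (e - f) * f) := by
    have : e * (f - e) + (e - f) * f = e * f - e * e + (e * f - f * f) := by noncomm_ring
    rw [this, he.eq, hf.eq]
    simp only [w]
    noncomm_ring
  have hnorm : ‖1 - w‖ < 1 := by
    rw [hw, norm_neg]
    calc ‖e * (f - e) + (e - f) * f‖ ≤ ‖e‖ * ‖f - e‖ + ‖e - f‖ * ‖f‖ :=
          (norm_add_le _ _).trans (add_le_add (norm_mul_le _ _) (norm_mul_le _ _))
      _ = ‖e - f‖ * (‖e‖ + ‖f‖) := by rw [norm_sub_rev f e]; ring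
      _ < 1 := h
  have hwf : w * f = e * w := by
    simp only [w]
    calc _ = e * (f * f) + (1 - e) * (f - f * f) := by noncomm_ring
      _ = (e * e) * f + (e - e * e) * (1 - f) := by rw [he.eq, hf.eq]; noncomm_ring
      _ = _ := by noncomm_ring
  refine ⟨Units.oneSub (1 - w) hnorm, Units.joined_one_oneSub hnorm, ?_⟩
  rw [Units.mul_inv_eq_iff_eq_mul, Units.val_oneSub, sub_sub_cancel, hwf]

lemma JoinedIn.conjByJoinedUnit {e f : A} (h : JoinedIn {r : A | IsIdempotentElem r} e f) :
    ConjByJoinedUnit e f := by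
  obtain ⟨γ, hγ⟩ := h
  suffices ∀ s t, ConjByJoinedUnit (γ s) (γ t) by simpa using this 0 1
  refine PreconnectedSpace.induction₂' _ (fun s => ?_) ⟨fun _ _ _ => .trans⟩
  have hnear : ∀ᶠ t in nhds s, ‖γ s - γ t‖ * (‖γ s‖ + ‖γ t‖) < 1 := by
    have hcont : Continuous fun t => ‖γ s - γ t‖ * (‖γ s‖ + ‖γ t‖) := by fun_prop
    exact hcont.continuousAt.eventually_lt continuousAt_const (by simp)
  filter_upwards [hnear] with t ht
  have ht' : ‖γ t - γ s‖ * (‖γ t‖ + ‖γ s‖) < 1 := by rwa [norm_sub_rev, add_comm]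
  exact ⟨(hγ s).conjByJoinedUnit_of_norm_lt (hγ t) ht,
    (hγ t).conjByJoinedUnit_of_norm_lt (hγ s) ht'⟩

end BanachAlgebra

namespace ContinuousLinearMap

section Block

variable {R X Y : Type*} [Semiring R] [TopologicalSpace X] [AddCommMonoid X] [Module R X]
  [TopologicalSpace Y] [AddCommMonoid Y] [Module R Y]

variable (R X Y) in
@[simps]
def prodMapMonoidHom : (X →L[R] X) × (Y →L[R] Y) →* (X × Y →L[R] X × Y) where
  toFun f := f.1.prodMap f.2
  map_one' := by ext <;> simp
  map_mul' _ _ := by ext <;> simp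

lemma prodMapMonoidHom_injective :
    Function.Injective (prodMapMonoidHom R X Y) := by
  intro f g h
  refine Prod.ext (ext fun x => ?_) (ext fun y => ?_)
  · simpa using congrArg Prod.fst (DFunLike.congr_fun h (x, 0))
  · simpa using congrArg Prod.snd (DFunLike.congr_fun h (0, y))

lemma eq_prodMap_of_commute {c : X × Y →L[R] X × Y}
    (hc : Commute c ((ContinuousLinearMap.id R X).prodMap 0)) :
    c = prodMapMonoidHom R X Y ((fst R X Y).comp (c.comp (inl R X Y)),
      (snd R X Y).comp (c.comp (inr R X Y))) := by
  have hX (x : X) : (c (x, 0)).2 = 0 := by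
    simpa using congrArg Prod.snd (DFunLike.congr_fun hc (x, 0))
  have hY (y : Y) : (c (0, y)).1 = 0 := by
    simpa [Prod.mk_zero_zero] using (congrArg Prod.fst (DFunLike.congr_fun hc (0, y))).symm
  ext <;> simp [hX, hY]

end Block

section Normed

variable {𝕜 X Y : Type*} [NontriviallyNormedField 𝕜] [SeminormedAddCommGroup X] [NormedSpace 𝕜 X]
  [SeminormedAddCommGroup Y] [NormedSpace 𝕜 Y]

lemma continuous_prodMapMonoidHom : Continuous (prodMapMonoidHom 𝕜 X Y) :=
  (prodMapL 𝕜 X X Y Y).continuous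

lemma joined_one_of_commute [PathConnectedSpace (X →L[𝕜] X)ˣ]
    [PathConnectedSpace (Y →L[𝕜] Y)ˣ] (c : (X × Y →L[𝕜] X × Y)ˣ)
    (hc : Commute (c : X × Y →L[𝕜] X × Y) ((ContinuousLinearMap.id 𝕜 X).prodMap 0)) :
    Joined 1 c := by
  set F := prodMapMonoidHom 𝕜 X Y
  obtain ⟨a, ha⟩ : ∃ a, F a = c := ⟨_, (eq_prodMap_of_commute hc).symm⟩
  obtain ⟨b, hb⟩ : ∃ b, F b = ↑c⁻¹ := ⟨_, (eq_prodMap_of_commute hc.units_inv_left).symm⟩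
  let v : ((X →L[𝕜] X) × (Y →L[𝕜] Y))ˣ :=
    ⟨a, b, prodMapMonoidHom_injective (by rw [map_mul, ha, hb, Units.mul_inv, map_one]),
      prodMapMonoidHom_injective (by rw [map_mul, ha, hb, Units.inv_mul, map_one])⟩
  have hv : Units.map F v = c := Units.ext ha
  have hcont : Continuous fun g => Units.map F (MulEquiv.prodUnits.symm g) :=
    (continuous_prodMapMonoidHom.units_map F).comp Homeomorph.prodUnits.symm.continuous
  simpa [hv] using (PathConnectedSpace.joined 1 (MulEquiv.prodUnits v)).map hcont

end Normed

end ContinuousLinearMap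

theorem stmt17 {X Y : Type*} [NormedAddCommGroup X] [NormedSpace ℝ X] [CompleteSpace X]
    [NormedAddCommGroup Y] [NormedSpace ℝ Y] [CompleteSpace Y]
    (p : (X × Y) →L[ℝ] (X × Y))
    (hp : p = (ContinuousLinearMap.id ℝ X).prodMap (0 : Y →L[ℝ] Y))
    (hX : PathConnectedSpace (X →L[ℝ] X)ˣ)
    (hY : PathConnectedSpace (Y →L[ℝ] Y)ˣ)
    (hE : ¬ PathConnectedSpace ((X × Y) →L[ℝ] (X × Y))ˣ) :
    ∃ t : ((X × Y) →L[ℝ] (X × Y))ˣ,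
      ¬ JoinedIn {r : (X × Y) →L[ℝ] (X × Y) | r * r = r} p
          ((t : (X × Y) →L[ℝ] (X × Y)) * p * (↑t⁻¹ : (X × Y) →L[ℝ] (X × Y))) := by
  by_contra! h
  subst hp
  have hjoined (t : ((X × Y) →L[ℝ] (X × Y))ˣ) : Joined 1 t := by
    obtain ⟨w, hw, hconj⟩ := (h t).conjByJoinedUnit
    have hcomm : Commute ((w * t : ((X × Y) →L[ℝ] (X × Y))ˣ) : (X × Y) →L[ℝ] (X × Y))
        ((ContinuousLinearMap.id ℝ X).prodMap 0) :=
      (Units.mul_inv_eq_iff_eq_mul _).mp (by simpa [mul_assoc] using hconj)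
    simpa using hw.inv.mul (ContinuousLinearMap.joined_one_of_commute (w * t) hcomm)
  exact hE ⟨⟨1⟩, fun u v => (hjoined u).symm.trans (hjoined v)⟩
end
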